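/- arXiv:math/0601023 — 5 statements merged into one kernel-verified Lean document; each statement's English description precedes it below -/
import Mathlib

section
/- Let A ⊆ B be an algebraic extension of integral domains, with A a Poisson algebra with bracket {·,·}_A, and suppose B carries a skew-symmetric biderivation {·,·}_B extending {·,·}_A. Then {·,·}_B satisfies the Jacobi identity, i.e., it is a Poisson bracket. -/
/-- A derivation of `B` that vanishes on the image of `A` vanishes everywhere,
when `B` is algebraic over `A` (domains, characteristic zero). -/
private lemma aux_deriv_zero {K A B : Type*} [Field K] [CharZero K]
    [CommRing A] [IsDomain A] [CommRing B] [IsDomain B]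
    [Algebra K A] [Algebra K B] [Algebra A B] [IsScalarTower K A B]
    (hinj : Function.Injective (algebraMap A B))
    (halg : Algebra.IsAlgebraic A B)
    (D : B →ₗ[K] B)
    (hmul : ∀ x y : B, D (x * y) = D x * y + D y * x)
    (hA : ∀ a : A, D (algebraMap A B a) = 0) :
    ∀ b : B, D b = 0 := by
  have hCA : CharZero A := charZero_of_injective_algebraMap (algebraMap K A).injective
  intro b
  have key : ∀ q : Polynomial A,
      D (Polynomial.aeval b q) = Polynomial.aeval b (Polynomial.derivative q) * D b := by
    intro q
    induction q using Polynomial.induction_on with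
    | C a => simp [hA]
    | add p q hp hq => simp only [map_add, hp, hq]; ring
    | monomial n a ih =>
      have e1 : (Polynomial.C a * Polynomial.X ^ (n + 1) : Polynomial A)
          = (Polynomial.C a * Polynomial.X ^ n) * Polynomial.X := by ring
      have e2 : Polynomial.derivative (Polynomial.C a * Polynomial.X ^ n * Polynomial.X)
          = Polynomial.derivative (Polynomial.C a * Polynomial.X ^ n) * Polynomial.X
            + (Polynomial.C a * Polynomial.X ^ n) := by
        rw [Polynomial.derivative_mul, Polynomial.derivative_X, mul_one]
      rw [e1, map_mul (Polynomial.aeval b), Polynomial.aeval_X, hmul, ih, e2]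
      simp only [map_add, map_mul, Polynomial.aeval_X]
      ring
  obtain ⟨p, hp, hpb⟩ := halg.isAlgebraic b
  suffices hmain : ∀ (n : ℕ) (p : Polynomial A), p ≠ 0 → Polynomial.aeval b p = 0 →
      p.natDegree = n → D b = 0 by exact hmain p.natDegree p hp hpb rfl
  intro n
  induction n using Nat.strong_induction_on with
  | _ n ih =>
    intro p hp hpb hdeg
    by_cases h0 : p.natDegree = 0
    · obtain ⟨a, rfl⟩ := Polynomial.natDegree_eq_zero.mp h0
      rw [Polynomial.aeval_C] at hpb
      have ha : a = 0 := hinj (by simpa using hpb)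
      exact absurd (by simp [ha]) hp
    · have hd : Polynomial.derivative p ≠ 0 := by
        intro h
        exact h0 (Polynomial.natDegree_eq_zero_of_derivative_eq_zero h)
      by_cases h1 : Polynomial.aeval b (Polynomial.derivative p) = 0
      · exact ih _ (hdeg ▸ Polynomial.natDegree_derivative_lt h0) _ hd h1 rfl
      · have hk := key p
        rw [hpb, map_zero] at hk
        rcases mul_eq_zero.mp hk.symm with h | h
        · exact absurd h h1
        · exact h

/-- **Proposition 2.1.1.**  Let `A ⊆ B` be an algebraic extension of integral domains over a
field of characteristic zero, where `A` is a Poisson algebra with bracket `PA` and `B`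
carries a skew-symmetric biderivation `PB` extending `PA`.  Then `PB` satisfies the Jacobi
identity, i.e. it is a Poisson bracket. -/
theorem extended_bracket_is_poisson
    {K A B : Type*} [Field K] [CharZero K]
    [CommRing A] [IsDomain A] [CommRing B] [IsDomain B]
    [Algebra K A] [Algebra K B] [Algebra A B] [IsScalarTower K A B]
    (hinj : Function.Injective (algebraMap A B))
    (halg : Algebra.IsAlgebraic A B)
    (PA : A →ₗ[K] A →ₗ[K] A)
    (hAskew : ∀ f g : A, PA f g = - PA g f)
    (hAleib : ∀ f g h : A, PA f (g * h) = PA f g * h + PA f h * g)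
    (hAjac : ∀ f g h : A, PA f (PA g h) + PA g (PA h f) + PA h (PA f g) = 0)
    (PB : B →ₗ[K] B →ₗ[K] B)
    (hBskew : ∀ f g : B, PB f g = - PB g f)
    (hBleib : ∀ f g h : B, PB f (g * h) = PB f g * h + PB f h * g)
    (hext : ∀ a b : A, PB (algebraMap A B a) (algebraMap A B b)
        = algebraMap A B (PA a b)) :
    ∀ f g h : B, PB f (PB g h) + PB g (PB h f) + PB h (PB f g) = 0 := by
  -- rewrite the jacobiator as a linear map in its third argument
  have hB0 : ∀ f g h : B, PB f (PB g h) + PB g (PB h f) + PB h (PB f g)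
      = ((PB f).comp (PB g) - (PB g).comp (PB f) - PB (PB f g)) h := by
    intro f g h
    simp only [LinearMap.sub_apply, LinearMap.coe_comp, Function.comp_apply]
    rw [hBskew h f, map_neg, hBskew h (PB f g)]
    ring
  -- that linear map is a derivation
  have hder : ∀ f g x y : B,
      ((PB f).comp (PB g) - (PB g).comp (PB f) - PB (PB f g)) (x * y)
      = ((PB f).comp (PB g) - (PB g).comp (PB f) - PB (PB f g)) x * y
        + ((PB f).comp (PB g) - (PB g).comp (PB f) - PB (PB f g)) y * x := by
    intro f g x y
    simp only [LinearMap.sub_apply, LinearMap.coe_comp, Function.comp_apply]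
    rw [hBleib g x y, hBleib f x y, map_add, map_add,
      hBleib f (PB g x) y, hBleib f (PB g y) x,
      hBleib g (PB f x) y, hBleib g (PB f y) x,
      hBleib (PB f g) x y]
    ring
  -- the jacobiator changes sign when swapping the last two arguments
  have swap23 : ∀ f g h : B, PB f (PB g h) + PB g (PB h f) + PB h (PB f g)
      = -(PB f (PB h g) + PB h (PB g f) + PB g (PB f h)) := by
    intro f g h
    rw [hBskew h g, hBskew g f, hBskew f h, map_neg, map_neg, map_neg]
    ring
  -- step 1: jacobiator vanishes when the first two arguments come from A
  have step1 : ∀ (a a' : A) (b : B),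
      PB (algebraMap A B a) (PB (algebraMap A B a') b)
        + PB (algebraMap A B a') (PB b (algebraMap A B a))
        + PB b (PB (algebraMap A B a) (algebraMap A B a')) = 0 := by
    intro a a' b
    rw [hB0]
    refine aux_deriv_zero hinj halg _ (hder _ _) (fun a'' => ?_) b
    rw [← hB0]
    simp only [hext]
    rw [← map_add, ← map_add, hAjac, map_zero]
  -- step 2: jacobiator vanishes when one argument comes from A
  have step2 : ∀ (a : A) (b b' : B),
      PB (algebraMap A B a) (PB b b') + PB b (PB b' (algebraMap A B a))
        + PB b' (PB (algebraMap A B a) b) = 0 := by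
    intro a b b'
    rw [hB0]
    refine aux_deriv_zero hinj halg _ (hder _ _) (fun a' => ?_) b'
    rw [← hB0, swap23, step1 a a' b, neg_zero]
  -- step 3: general case
  intro f g h
  rw [hB0]
  refine aux_deriv_zero hinj halg _ (hder _ _) (fun a => ?_) h
  rw [← hB0]
  linear_combination step2 a f g
end

section
/- Let A be a Noetherian algebra over a field K of characteristic 0 and D : A → A a derivation. Then every minimal prime ideal of A is stable under D, i.e., D(p) ⊆ p for every minimal prime p of A. -/
/-!
Let `x ∈ p`. Since `p` is minimal, `x` is nilpotent in `A_p`, so `s * x ^ n = 0` for some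
`s ∉ p`. Differentiating and multiplying by `s` gives `n • (s * s * D x) * x ^ (n - 1) = 0`;
if `D x ∉ p`, then `s * s * D x ∉ p` and, `A` being torsion-free, `n` drops by one.
Descending to `n = 0` forces `s = 0 ∈ p`.
-/

theorem Ideal.exists_mul_pow_eq_zero_of_mem_minimalPrimes {A : Type*} [CommRing A]
    {p : Ideal A} (hp : p ∈ minimalPrimes A) {x : A} (hx : x ∈ p) :
    ∃ s ∉ p, ∃ n : ℕ, s * x ^ n = 0 := by
  have := hp.1.1
  have := Ring.KrullDimLE.of_isLocalization p hp (Localization.AtPrime p)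
  have hnil : IsNilpotent (algebraMap A (Localization.AtPrime p) x) := by
    rw [Ring.KrullDimLE.isNilpotent_iff_mem_maximalIdeal]
    exact (IsLocalization.AtPrime.to_map_mem_maximal_iff _ p x).mpr hx
  obtain ⟨n, hn⟩ := hnil
  rw [← map_pow, IsLocalization.map_eq_zero_iff p.primeCompl] at hn
  obtain ⟨⟨s, hs⟩, hsx⟩ := hn
  exact ⟨s, hs, n, hsx⟩

namespace Derivation

variable {R A : Type*} [CommSemiring R] [CommRing A] [Algebra R A] (D : Derivation R A A)

theorem nsmul_mul_pow_eq_zero_of_mul_pow_succ_eq_zero {s x : A} {n : ℕ}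
    (h : s * x ^ (n + 1) = 0) : (n + 1) • (s * s * D x * x ^ n) = 0 := by
  have hD : s * ((n + 1 : A) * x ^ n * D x) + x ^ (n + 1) * D s = 0 := by
    simpa [D.leibniz_pow, smul_eq_mul, mul_assoc] using congrArg D h
  rw [nsmul_eq_mul]
  push_cast
  linear_combination s * hD - D s * h

theorem map_mem_of_mul_pow_eq_zero [IsAddTorsionFree A] {p : Ideal A} [p.IsPrime] {x : A} :
    ∀ {n : ℕ} {s : A}, s ∉ p → s * x ^ n = 0 → D x ∈ p
  | 0, s, hs, h => by
    rw [pow_zero, mul_one] at h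
    exact absurd (h ▸ p.zero_mem) hs
  | n + 1, s, hs, h => by
    by_contra hDx
    have hs' : s * s * D x ∉ p := by
      simpa [Ideal.IsPrime.mul_mem_iff_mem_or_mem, hs] using hDx
    exact hDx <| map_mem_of_mul_pow_eq_zero hs' <|
      nsmul_right_injective n.succ_ne_zero <|
        (D.nsmul_mul_pow_eq_zero_of_mul_pow_succ_eq_zero h).trans (smul_zero _).symm

theorem map_mem_of_mem_minimalPrimes [IsAddTorsionFree A] {p : Ideal A}
    (hp : p ∈ minimalPrimes A) {x : A} (hx : x ∈ p) : D x ∈ p :=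
  have := hp.1.1
  let ⟨_, hs, _, h⟩ := Ideal.exists_mul_pow_eq_zero_of_mem_minimalPrimes hp hx
  D.map_mem_of_mul_pow_eq_zero hs h

end Derivation

theorem minimalPrime_stable_under_derivation_general
    {K A : Type*} [Field K] [CharZero K] [CommRing A] [Algebra K A]
    (D : Derivation K A A) (p : Ideal A) (hp : p ∈ minimalPrimes A) :
    ∀ x ∈ p, D x ∈ p := by
  have : IsAddTorsionFree A := .of_isTorsionFree K A
  exact fun _ hx => D.map_mem_of_mem_minimalPrimes hp hx

/-- **Lemma 2.1.4.**  Minimal prime ideals of a Noetherian algebra over a field of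
characteristic zero are stable under any derivation. -/
theorem minimalPrime_stable_under_derivation
    {K A : Type*} [Field K] [CharZero K] [CommRing A] [Algebra K A]
    [IsNoetherianRing A]
    (D : Derivation K A A) (p : Ideal A) (hp : p ∈ minimalPrimes A) :
    ∀ x ∈ p, D x ∈ p :=
  minimalPrime_stable_under_derivation_general D p hp
end

section
/- Let A be a Poisson algebra which is an integral domain, and let S ⊆ A be a multiplicatively closed subset not containing 0. Then the localization A_S carries a unique Poisson bracket making the localization map A → A_S a Poisson homomorphism. -/
section PoissonLocalization

variable {K A : Type*} [Field K] [CommRing A] [IsDomain A] [Algebra K A]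

/-- Numerator of the localized Poisson bracket `{a/s, b/t}`. -/
def pnum (P : A →ₗ[K] A →ₗ[K] A) (a s b t : A) : A :=
  P a b * (s * t) - P a t * (s * b) - P s b * (a * t) + P s t * (a * b)

theorem locmk_eq {S : Submonoid A} (X Y : A) (u v : S)
    (h : (v : A) * X = (u : A) * Y) :
    Localization.mk X u = Localization.mk Y v :=
  Localization.mk_eq_mk_iff.mpr (Localization.r_iff_exists.mpr ⟨1, by simpa using h⟩)

theorem rel_of_r {S : Submonoid A} (hS : (0 : A) ∉ S) {a a' : A} {s s' : S}
    (h : Localization.r S (a, s) (a', s')) : (s' : A) * a = (s : A) * a' := by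
  obtain ⟨c, hc⟩ := Localization.r_iff_exists.mp h
  have hc0 : (c : A) ≠ 0 := fun h0 => hS (h0 ▸ c.2)
  exact mul_left_cancel₀ hc0 hc

theorem pnum_skew (P : A →ₗ[K] A →ₗ[K] A) (hskew : ∀ f g : A, P f g = - P g f)
    (a s b t : A) : pnum P a s b t = - pnum P b t a s := by
  unfold pnum
  linear_combination (s * t) * hskew a b - (s * b) * hskew a t - (a * t) * hskew s b
    + (a * b) * hskew s t

theorem qwd2 (P : A →ₗ[K] A →ₗ[K] A)
    (hleib : ∀ f g h : A, P f (g * h) = P f g * h + P f h * g)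
    {S : Submonoid A} (a b b' : A) (s t t' : S) (h : (t' : A) * b = (t : A) * b') :
    Localization.mk (pnum P a s b t) (s * t * (s * t))
      = Localization.mk (pnum P a s b' t') (s * t' * (s * t')) := by
  apply locmk_eq
  have ha : P a t' * b + P a b * t' = P a t * b' + P a b' * t := by
    have h3 : P a ((t' : A) * b) = P a ((t : A) * b') := by rw [h]
    linear_combination h3 - hleib a t' b + hleib a t b'
  have hs2 : P (s : A) t' * b + P (s : A) b * t' = P (s : A) t * b' + P (s : A) b' * t := by
    have h3 : P (s : A) ((t' : A) * b) = P (s : A) ((t : A) * b') := by rw [h]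
    linear_combination h3 - hleib s t' b + hleib s t b'
  simp only [Submonoid.coe_mul, pnum]
  linear_combination ((s : A) ^ 3 * t * t') * ha - ((s : A) ^ 2 * a * t * t') * hs2
    + ((s : A) ^ 2 * (-(s : A) * t' * (P a t) + a * t' * (P (s : A) t)
        - (s : A) * t * (P a t') + a * t * (P (s : A) t'))) * h

theorem qwd1 (P : A →ₗ[K] A →ₗ[K] A) (hskew : ∀ f g : A, P f g = - P g f)
    (hleib : ∀ f g h : A, P f (g * h) = P f g * h + P f h * g)
    {S : Submonoid A} (a a' b : A) (s s' t : S) (h : (s' : A) * a = (s : A) * a') :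
    Localization.mk (pnum P a s b t) (s * t * (s * t))
      = Localization.mk (pnum P a' s' b t) (s' * t * (s' * t)) := by
  have e1 : Localization.mk (pnum P a s b t) (s * t * (s * t))
      = - Localization.mk (pnum P b t a s) (t * s * (t * s)) := by
    rw [pnum_skew P hskew a s b t, Localization.neg_mk, mul_comm s t]
  have e2 : Localization.mk (pnum P a' s' b t) (s' * t * (s' * t))
      = - Localization.mk (pnum P b t a' s') (t * s' * (t * s')) := by
    rw [pnum_skew P hskew a' (s' : A) b t, Localization.neg_mk, mul_comm s' t]
  rw [e1, e2, qwd2 P hleib b a a' t s s' h]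

/-- The localized Poisson bracket. -/
def locPB (P : A →ₗ[K] A →ₗ[K] A) (hskew : ∀ f g : A, P f g = - P g f)
    (hleib : ∀ f g h : A, P f (g * h) = P f g * h + P f h * g)
    {S : Submonoid A} (hS : (0 : A) ∉ S) :
    Localization S → Localization S → Localization S := fun x y =>
  Localization.liftOn₂ x y
    (fun a s b t => Localization.mk (pnum P a s b t) (s * t * (s * t)))
    (fun {a a' b b' c c' d d'} h1 h2 => by
      have e1 := rel_of_r hS h1
      have e2 := rel_of_r hS h2
      show Localization.mk (pnum P a b c d) (b * d * (b * d))
        = Localization.mk (pnum P a' b' c' d') (b' * d' * (b' * d'))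
      rw [qwd1 P hskew hleib a a' c b b' d e1, qwd2 P hleib a' c c' b' d d' e2])

theorem locPB_mk (P : A →ₗ[K] A →ₗ[K] A) (hskew : ∀ f g : A, P f g = - P g f)
    (hleib : ∀ f g h : A, P f (g * h) = P f g * h + P f h * g)
    {S : Submonoid A} (hS : (0 : A) ∉ S) (a b : A) (s t : S) :
    locPB P hskew hleib hS (Localization.mk a s) (Localization.mk b t)
      = Localization.mk (pnum P a s b t) (s * t * (s * t)) := rfl

/-- A Leibniz-rule map on a localization vanishing on the image of `A` vanishes. -/
theorem ext_zero {S : Submonoid A} (D : Localization S → Localization S)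
    (hl : ∀ x y, D (x * y) = x * D y + y * D x)
    (h0 : ∀ a : A, D (algebraMap A (Localization S) a) = 0) (x : Localization S) :
    D x = 0 := by
  obtain ⟨⟨a, s⟩, hx⟩ := IsLocalization.surj (M := S) x
  have hu : IsUnit (algebraMap A (Localization S) (s : A)) :=
    IsLocalization.map_units (Localization S) s
  have h1 : D (x * algebraMap A (Localization S) (s : A)) = 0 := by rw [hx, h0]
  rw [hl, h0 (s : A)] at h1
  have h2 : algebraMap A (Localization S) (s : A) * D x = 0 := by linear_combination h1
  exact (IsUnit.mul_right_eq_zero hu).mp h2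

/-- Jacobiator. -/
def jac3 {L : Type*} [CommRing L] (Q : L → L → L) (f g h : L) : L :=
  Q f (Q g h) + Q g (Q h f) + Q h (Q f g)

theorem jac3_cyc {L : Type*} [CommRing L] (Q : L → L → L) (f g h : L) :
    jac3 Q f g h = jac3 Q g h f := by unfold jac3; ring

theorem jac3_leib {L : Type*} [CommRing L] (Q : L → L → L)
    (qsk : ∀ f g, Q f g = - Q g f)
    (ql2 : ∀ f g h, Q f (g * h) = Q f g * h + Q f h * g)
    (qadd : ∀ f x y, Q f (x + y) = Q f x + Q f y) (x y g h : L) :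
    jac3 Q (x * y) g h = x * jac3 Q y g h + y * jac3 Q x g h := by
  have ql1 : ∀ u v w : L, Q (u * v) w = Q u w * v + Q v w * u := fun u v w => by
    linear_combination qsk (u * v) w - ql2 w u v - v * qsk w u - u * qsk w v
  unfold jac3
  rw [ql1 x y (Q g h), ql2 h x y,
    qadd g (Q h x * y) (Q h y * x), ql2 g (Q h x) y, ql2 g (Q h y) x,
    ql1 x y g, qadd h (Q x g * y) (Q y g * x), ql2 h (Q x g) y, ql2 h (Q y g) x]
  linear_combination Q h y * qsk x g + Q h x * qsk y g

theorem jac3_zero (P : A →ₗ[K] A →ₗ[K] A)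
    (hjac : ∀ f g h : A, P f (P g h) + P g (P h f) + P h (P f g) = 0)
    {S : Submonoid A} (Q : Localization S → Localization S → Localization S)
    (qcmp : ∀ a b : A, Q (algebraMap A (Localization S) a) (algebraMap A (Localization S) b)
      = algebraMap A (Localization S) (P a b))
    (qsk : ∀ f g, Q f g = - Q g f)
    (ql2 : ∀ f g h, Q f (g * h) = Q f g * h + Q f h * g)
    (qadd : ∀ f x y, Q f (x + y) = Q f x + Q f y) :
    ∀ f g h, jac3 Q f g h = 0 := by
  set φ := algebraMap A (Localization S) with hφ
  have j0 : ∀ a b c : A, jac3 Q (φ a) (φ b) (φ c) = 0 := by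
    intro a b c
    unfold jac3
    rw [qcmp b c, qcmp c a, qcmp a b, qcmp a (P b c), qcmp b (P c a), qcmp c (P a b),
      ← map_add, ← map_add, hjac a b c, map_zero]
  have step1 : ∀ (a b : A) (h : Localization S), jac3 Q (φ a) (φ b) h = 0 := by
    intro a b h
    refine ext_zero (fun z => jac3 Q (φ a) (φ b) z) ?_ (fun c => j0 a b c) h
    intro x y
    show jac3 Q (φ a) (φ b) (x * y)
      = x * jac3 Q (φ a) (φ b) y + y * jac3 Q (φ a) (φ b) x
    linear_combination jac3_cyc Q (φ a) (φ b) (x * y) + jac3_cyc Q (φ b) (x * y) (φ a)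
      + jac3_leib Q qsk ql2 qadd x y (φ a) (φ b)
      + x * jac3_cyc Q y (φ a) (φ b) + y * jac3_cyc Q x (φ a) (φ b)
  have step2 : ∀ (a : A) (g h : Localization S), jac3 Q (φ a) g h = 0 := by
    intro a g h
    refine ext_zero (fun z => jac3 Q (φ a) z h) ?_ (fun b => step1 a b h) g
    intro x y
    show jac3 Q (φ a) (x * y) h = x * jac3 Q (φ a) y h + y * jac3 Q (φ a) x h
    linear_combination jac3_cyc Q (φ a) (x * y) h
      + jac3_leib Q qsk ql2 qadd x y h (φ a)
      + x * (jac3_cyc Q y h (φ a) + jac3_cyc Q h (φ a) y)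
      + y * (jac3_cyc Q x h (φ a) + jac3_cyc Q h (φ a) x)
  intro f g h
  refine ext_zero (fun z => jac3 Q z g h) ?_ (fun a => step2 a g h) f
  intro x y
  show jac3 Q (x * y) g h = x * jac3 Q y g h + y * jac3 Q x g h
  exact jac3_leib Q qsk ql2 qadd x y g h

end PoissonLocalization

/-- **Localization of a Poisson algebra.**  Let `A` be a Poisson algebra which is an
integral domain and `S ⊆ A` a multiplicatively closed subset not containing `0`.  Then the
localization `A_S` carries a unique Poisson bracket making the localization map `A → A_S`
a Poisson homomorphism. -/
theorem localization_poisson_bracket_exists_unique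
    {K A : Type*} [Field K] [CommRing A] [IsDomain A] [Algebra K A]
    (P : A →ₗ[K] A →ₗ[K] A)
    (hskew : ∀ f g : A, P f g = - P g f)
    (hleib : ∀ f g h : A, P f (g * h) = P f g * h + P f h * g)
    (hjac : ∀ f g h : A, P f (P g h) + P g (P h f) + P h (P f g) = 0)
    (S : Submonoid A) (hS : (0 : A) ∉ S) :
    ∃! Q : Localization S → Localization S → Localization S,
      (∀ a b : A, Q (algebraMap A (Localization S) a) (algebraMap A (Localization S) b)
          = algebraMap A (Localization S) (P a b)) ∧
      (∀ f g : Localization S, Q f g = - Q g f) ∧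
      (∀ f g h : Localization S, Q f (g * h) = Q f g * h + Q f h * g) ∧
      (∀ f g h : Localization S, Q f (Q g h) + Q g (Q h f) + Q h (Q f g) = 0) := by
  set φ := algebraMap A (Localization S) with hφ
  set Q := locPB P hskew hleib hS with hQ
  -- auxiliary facts about P
  have hone : ∀ f : A, P f 1 = 0 := by
    intro f
    have h := hleib f 1 1
    rw [one_mul] at h
    linear_combination -h
  have hone' : ∀ f : A, P 1 f = 0 := by
    intro f; rw [hskew 1 f, hone, neg_zero]
  -- compatibility
  have qcmp : ∀ a b : A, Q (φ a) (φ b) = φ (P a b) := by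
    intro a b
    rw [hφ, ← Localization.mk_one_eq_algebraMap, ← Localization.mk_one_eq_algebraMap,
      ← Localization.mk_one_eq_algebraMap, hQ, locPB_mk]
    apply locmk_eq
    simp [pnum, hone, hone']
  -- skew
  have qsk : ∀ f g, Q f g = - Q g f := by
    intro f g
    refine Localization.induction_on₂ f g ?_
    rintro ⟨a, s⟩ ⟨b, t⟩
    rw [hQ, locPB_mk, locPB_mk, pnum_skew P hskew a (s : A) b (t : A),
      Localization.neg_mk, mul_comm t s]
  -- Leibniz
  have ql2 : ∀ f g h, Q f (g * h) = Q f g * h + Q f h * g := by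
    intro f g h
    refine Localization.induction_on₃ f g h ?_
    rintro ⟨a, s⟩ ⟨b, t⟩ ⟨c, u⟩
    rw [hQ, Localization.mk_mul, locPB_mk, locPB_mk, locPB_mk,
      Localization.mk_mul, Localization.mk_mul, Localization.add_mk]
    apply locmk_eq
    simp only [Submonoid.coe_mul, pnum, hleib]
    ring
  -- additivity in second argument
  have qadd : ∀ f x y, Q f (x + y) = Q f x + Q f y := by
    intro f x y
    refine Localization.induction_on₃ f x y ?_
    rintro ⟨a, s⟩ ⟨b, t⟩ ⟨c, u⟩
    rw [hQ, Localization.add_mk, locPB_mk, locPB_mk, locPB_mk, Localization.add_mk]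
    apply locmk_eq
    simp only [Submonoid.coe_mul, pnum, map_add, hleib]
    ring
  refine ⟨Q, ⟨qcmp, qsk, ql2, fun f g h => jac3_zero P hjac Q qcmp qsk ql2 qadd f g h⟩, ?_⟩
  -- uniqueness
  rintro Q' ⟨hc', hs', hl', -⟩
  have base : ∀ (a : A) (x : Localization S), Q' (φ a) x = Q (φ a) x := by
    intro a x
    have hD : ∀ z, Q' (φ a) z - Q (φ a) z = 0 := by
      intro z
      refine ext_zero (fun z => Q' (φ a) z - Q (φ a) z) ?_ ?_ z
      · intro x y
        show Q' (φ a) (x * y) - Q (φ a) (x * y)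
          = x * (Q' (φ a) y - Q (φ a) y) + y * (Q' (φ a) x - Q (φ a) x)
        linear_combination hl' (φ a) x y - ql2 (φ a) x y
      · intro b
        show Q' (φ a) (φ b) - Q (φ a) (φ b) = 0
        rw [hc' a b, qcmp a b, sub_self]
    linear_combination hD x
  funext f g
  have hD : ∀ z, Q' z g - Q z g = 0 := by
    intro z
    refine ext_zero (fun z => Q' z g - Q z g) ?_ ?_ z
    · intro x y
      show Q' (x * y) g - Q (x * y) g = x * (Q' y g - Q y g) + y * (Q' x g - Q x g)
      have l1' : Q' (x * y) g = Q' x g * y + Q' y g * x := by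
        linear_combination hs' (x * y) g - hl' g x y - y * hs' g x - x * hs' g y
      have l1 : Q (x * y) g = Q x g * y + Q y g * x := by
        linear_combination qsk (x * y) g - ql2 g x y - y * qsk g x - x * qsk g y
      linear_combination l1' - l1
    · intro a
      show Q' (φ a) g - Q (φ a) g = 0
      rw [base a g, sub_self]
  linear_combination hD f
end

section
/- Let T be a torus acting linearly on a finite-dimensional symplectic vector space U such that the action preserves the symplectic form and is effective. Then there exists a vector u ∈ U whose T-orbit is closed and of dimension equal to dim T. Equivalently: since U ≅ U* as T-modules, the set of weights of U is symmetric under negation; choosing linearly independent weights λ₁,…,λ_k (k = dim T) with nonzero weight vectors v_{λ_i}, v_{−λ_i}, the orbit of Σ_i(v_{λ_i} + v_{−λ_i}) is closed of dimension dim T. -/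
/-!
Weight vectors `v`, `w` of weights `λ`, `μ` are `ω`-orthogonal unless `λ + μ = 0`: some torus
element scales `ω v w` by `χ_{λ+μ}(t) ≠ 1`. So nondegeneracy makes the set of weights symmetric.
If an integer vector `a` were orthogonal to every weight, `t = (2^{a_j})` would act trivially;
by effectiveness the weights therefore span `ℚ^k`, and we pick weights `λ₁, …, λ_k` forming an
integer matrix `A` with `det A ≠ 0`, and nonzero weight vectors `vᵢ`, `wᵢ` of weights `±λᵢ`.
These `2k` weights are distinct, so the `vᵢ, wᵢ` are linearly independent, and in these
coordinates the orbit of `u = ∑ (vᵢ + wᵢ)` is the image of `t ↦ (χ_{λᵢ}(t), χ_{λᵢ}(t)⁻¹)ᵢ`.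
Taking `det A`-th roots and applying the adjugate shows that `t ↦ (χ_{λᵢ}(t))ᵢ` is onto
`(Kˣ)^k`, so the orbit is the closed set `{cᵢ⁺ cᵢ⁻ = 1}` in the span of the `vᵢ, wᵢ`. The
stabilizer of `u` lies in the kernel of that map, hence in `{t | t_j ^ det A = 1}`, a finite set.
-/

/-- A subset of a finite-dimensional vector space `U` is Zariski closed if it is the common
zero locus of a family of polynomial functions on `U` (polynomials in linear functionals). -/
def ZarClosedV (K : Type*) {U : Type*} [CommRing K] [AddCommGroup U] [Module K U] (S : Set U) : Prop :=
  ∃ I : Set (MvPolynomial (Module.Dual K U) K),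
    S = {x | ∀ p ∈ I, MvPolynomial.eval (fun φ : Module.Dual K U => φ x) p = 0}

open scoped Matrix

lemma Finset.prod_zpow_eq_zpow_sum {G ι : Type*} [CommGroup G] (s : Finset ι) (f : ι → ℤ)
    (g : G) : ∏ i ∈ s, g ^ f i = g ^ ∑ i ∈ s, f i := by
  induction s using Finset.cons_induction <;> simp_all [zpow_add]

lemma LinearIndependent.injective_sumElim_neg {ι R M : Type*} [Ring R] [CharZero R]
    [AddCommGroup M] [Module R M] {v : ι → M} (hv : LinearIndependent R v) :
    Function.Injective (Sum.elim v (-v)) := by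
  classical
  have hne : ∀ i j, v i ≠ -v j := fun i j h => by
    have h0 := congrArg (· i) <| linearIndependent_iff.mp hv
      (Finsupp.single i 1 + Finsupp.single j 1) (by simp [Finsupp.linearCombination_single, h])
    by_cases hij : j = i
    · subst hij; simp [one_add_one_eq_two] at h0
    · simp [hij] at h0
  rintro (i | i) (j | j) h
  · exact congrArg Sum.inl (hv.injective h)
  · exact absurd h (hne i j)
  · exact absurd h.symm (hne j i)
  · exact congrArg Sum.inr (hv.injective (neg_injective h))

lemma Units.not_isOfFinOrder_mk0_two (K : Type*) [Field K] [CharZero K] :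
    ¬ IsOfFinOrder (Units.mk0 (2 : K) two_ne_zero) := by
  rw [isOfFinOrder_iff_pow_eq_one]
  rintro ⟨n, hn, h⟩
  have h2 : ((2 ^ n : ℕ) : K) = 1 := by simpa [Units.ext_iff] using h
  rw [Nat.cast_eq_one, Nat.pow_eq_one] at h2
  omega

lemma IsAlgClosed.exists_zpow_eq_units {K : Type*} [Field K] [IsAlgClosed K] (c : Kˣ) {d : ℤ}
    (hd : d ≠ 0) : ∃ s : Kˣ, s ^ d = c := by
  obtain ⟨z, hz⟩ := IsAlgClosed.exists_pow_nat_eq (c : K) (Int.natAbs_pos.mpr hd)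
  have hz0 : z ≠ 0 := by rintro rfl; exact c.ne_zero (by simpa [hd] using hz.symm)
  have hpow : Units.mk0 z hz0 ^ d.natAbs = c := Units.ext (by simpa using hz)
  rcases Int.natAbs_eq d with h | h
  · exact ⟨Units.mk0 z hz0, by rw [h, zpow_natCast, hpow]⟩
  · exact ⟨(Units.mk0 z hz0)⁻¹, by rw [h, inv_zpow', neg_neg, zpow_natCast, hpow]⟩

lemma Units.finite_setOf_zpow_eq_one (K : Type*) [CommRing K] [IsDomain K] {d : ℤ}
    (hd : d ≠ 0) : {x : Kˣ | x ^ d = 1}.Finite := by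
  have : NeZero d.natAbs := ⟨Int.natAbs_ne_zero.mpr hd⟩
  have hfin : Finite (rootsOfUnity d.natAbs K) := inferInstance
  convert (Set.finite_coe_iff (s := (rootsOfUnity d.natAbs K : Set Kˣ))).mp hfin using 1
  ext x
  simp [pow_natAbs_eq_one]

lemma LinearMap.BilinForm.apply_eq_zero_of_mul_ne_one {R M : Type*} [CommRing R]
    [NoZeroDivisors R] [AddCommGroup M] [Module R M] (ω : LinearMap.BilinForm R M) (g : M →ₗ[R] M)
    (hω : ∀ u w, ω (g u) (g w) = ω u w) {a b : R} {v w : M} (hv : g v = a • v)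
    (hw : g w = b • w) (hab : a * b ≠ 1) : ω v w = 0 := by
  have h := hω v w
  rw [hv, hw, map_smul, map_smul, LinearMap.smul_apply, smul_eq_mul, smul_eq_mul] at h
  have h' : (a * b - 1) * ω v w = 0 := by linear_combination h
  exact (mul_eq_zero.mp h').resolve_left (sub_ne_zero.mpr hab)

section ZariskiClosed

variable {K U V : Type*} [Field K] [AddCommGroup U] [Module K U] [AddCommGroup V] [Module K V]

lemma zarClosedV_setOf_forall_eval_eq_zero {ι : Type*} (J : Set (MvPolynomial ι K)) :
    ZarClosedV K {c : ι → K | ∀ p ∈ J, MvPolynomial.eval c p = 0} :=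
  ⟨MvPolynomial.rename (fun i => LinearMap.proj i) '' J, by
    ext c; simp [MvPolynomial.eval_rename, Function.comp_def]⟩

/-- With `P` a left inverse of `L`, the image is cut out by the equations of `S` pulled back
along `P` together with the linear equations `L (P x) = x`. -/
lemma ZarClosedV.image_of_injective {S : Set V} (hS : ZarClosedV K S) (L : V →ₗ[K] U)
    (hL : Function.Injective L) : ZarClosedV K (L '' S) := by
  obtain ⟨I, rfl⟩ := hS
  obtain ⟨P, hP⟩ := L.exists_leftInverse_of_injective (LinearMap.ker_eq_bot.mpr hL)
  have hPL : ∀ y, P (L y) = y := fun y => LinearMap.congr_fun hP y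
  refine ⟨MvPolynomial.rename (· ∘ₗ P) '' I ∪
    Set.range fun ψ : Module.Dual K U => MvPolynomial.X (ψ ∘ₗ (LinearMap.id - L ∘ₗ P)), ?_⟩
  ext x
  constructor
  · rintro ⟨y, hy, rfl⟩ p (⟨q, hq, rfl⟩ | ⟨ψ, rfl⟩)
    · simpa [MvPolynomial.eval_rename, Function.comp_def, hPL] using hy q hq
    · simp [hPL]
  · intro hx
    have hxL : L (P x) = x := by
      rw [← sub_eq_zero, ← neg_sub, neg_eq_zero]
      refine (Module.forall_dual_apply_eq_zero_iff K _).mp fun ψ => ?_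
      simpa using hx _ (Or.inr ⟨ψ, rfl⟩)
    refine ⟨P x, fun q hq => ?_, hxL⟩
    simpa [MvPolynomial.eval_rename, Function.comp_def] using hx _ (Or.inl ⟨q, hq, rfl⟩)

lemma zarClosedV_setOf_mul_eq_one (ι : Type*) :
    ZarClosedV K {c : ι ⊕ ι → K | ∀ i, c (Sum.inl i) * c (Sum.inr i) = 1} := by
  convert zarClosedV_setOf_forall_eval_eq_zero <| Set.range fun i : ι =>
    (MvPolynomial.X (Sum.inl i) * MvPolynomial.X (Sum.inr i) - 1 : MvPolynomial _ K) using 2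
  simp [sub_eq_zero]

end ZariskiClosed

section IntegerVectors

variable {k : ℕ}

lemma exists_intCast_dotProduct_eq_mul (φ : Module.Dual ℚ (Fin k → ℚ)) :
    ∃ (n : Fin k → ℤ) (c : ℚ), c ≠ 0 ∧ ∀ v, (Int.cast ∘ n) ⬝ᵥ v = c * φ v := by
  obtain ⟨b, hb⟩ := IsLocalization.exist_integer_multiples_of_finite (nonZeroDivisors ℤ)
    (fun j : Fin k => φ (Pi.single j 1))
  choose n hn using hb
  refine ⟨n, b, by simp [nonZeroDivisors.coe_ne_zero b], fun v => ?_⟩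
  have hφv : φ v = ∑ j, v j * φ (Pi.single j 1) := by
    conv_lhs => rw [← Finset.univ_sum_single v]
    simp [← smul_eq_mul, ← map_smul, ← Pi.single_smul']
  simp only [algebraMap_int_eq, eq_intCast] at hn
  simp [hφv, dotProduct, Finset.mul_sum, hn, mul_left_comm, mul_comm]

lemma exists_dotProduct_ne_zero {D : Finset (Fin k → ℤ)} (hD : 0 ∉ D) :
    ∃ n : Fin k → ℤ, ∀ ν ∈ D, n ⬝ᵥ ν ≠ 0 := by
  obtain ⟨φ, hφ⟩ := Module.exists_dual_forall_apply_ne_zero (K := ℚ)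
    (fun ν : D => (Int.cast ∘ (ν : Fin k → ℤ) : Fin k → ℚ))
    (fun ν h => hD (by
      convert ν.2
      exact (funext fun j => by simpa using congrFun h j).symm))
  obtain ⟨n, c, hc, hn⟩ := exists_intCast_dotProduct_eq_mul φ
  refine ⟨n, fun ν hν h => hφ ⟨ν, hν⟩ ?_⟩
  simpa [h, hc] using
    (hn (Int.cast ∘ ν)).symm.trans (RingHom.map_dotProduct (Int.castRingHom ℚ) n ν).symm

lemma exists_det_ne_zero_of_forall_dotProduct_eq_zero {Λ : Set (Fin k → ℤ)}
    (hΛ : ∀ a : Fin k → ℤ, (∀ lam ∈ Λ, a ⬝ᵥ lam = 0) → a = 0) :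
    ∃ A : Matrix (Fin k) (Fin k) ℤ, (∀ i, A i ∈ Λ) ∧ A.det ≠ 0 := by
  set S : Set (Fin k → ℚ) := (Int.cast ∘ ·) '' Λ
  have hS : ⊤ ≤ Submodule.span ℚ S := by
    by_contra h
    obtain ⟨φ, hφ0, hφS⟩ := (Submodule.span ℚ S).exists_le_ker_of_lt_top
      (lt_top_iff_ne_top.2 (by rwa [top_le_iff] at h))
    obtain ⟨n, c, hc, hn⟩ := exists_intCast_dotProduct_eq_mul φ
    have hn0 : n = 0 := hΛ n fun lam hlam => by
      have h0 : φ (Int.cast ∘ lam) = 0 := hφS (Submodule.subset_span ⟨lam, hlam, rfl⟩)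
      simpa [h0] using
        (RingHom.map_dotProduct (Int.castRingHom ℚ) n lam).trans (hn (Int.cast ∘ lam))
    exact hφ0 (LinearMap.ext fun v => by simpa [hn0, hc] using (hn v).symm)
  let b₀ := Module.Basis.ofSpan hS
  let b := b₀.reindex (b₀.indexEquiv (Pi.basisFun ℚ (Fin k)))
  have hbS : ∀ i, b i ∈ S := fun i =>
    Module.Basis.ofSpan_subset hS ⟨_, (b₀.reindex_apply _ i).symm⟩
  choose A hAΛ hA using hbS
  refine ⟨Matrix.of A, hAΛ, fun hdet => ?_⟩
  have hrows : ((Matrix.of A).map (Int.cast : ℤ → ℚ)).row = b := funext hA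
  have hunit := Matrix.linearIndependent_rows_iff_isUnit.mp (hrows ▸ b.linearIndependent)
  rw [Matrix.isUnit_iff_isUnit_det, ← Int.cast_det, hdet, Int.cast_zero] at hunit
  exact not_isUnit_zero hunit

end IntegerVectors

namespace Torus

variable {G : Type*} [CommGroup G] {k m n : ℕ}

def character (lam : Fin k → ℤ) : (Fin k → G) →* G where
  toFun t := ∏ j, t j ^ lam j
  map_one' := by simp
  map_mul' s t := by simp [mul_zpow, Finset.prod_mul_distrib]

lemma character_apply (lam : Fin k → ℤ) (t : Fin k → G) : character lam t = ∏ j, t j ^ lam j :=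
  rfl

lemma character_add (lam mu : Fin k → ℤ) (t : Fin k → G) :
    character (lam + mu) t = character lam t * character mu t := by
  simp [character_apply, _root_.zpow_add, Finset.prod_mul_distrib]

lemma character_neg (lam : Fin k → ℤ) (t : Fin k → G) :
    character (-lam) t = (character lam t)⁻¹ := by
  simp [character_apply]

lemma character_sub (lam mu : Fin k → ℤ) (t : Fin k → G) :
    character (lam - mu) t = character lam t / character mu t := by
  rw [sub_eq_add_neg, character_add, character_neg, div_eq_mul_inv]

lemma character_zpow_const (g : G) (n lam : Fin k → ℤ) :
    character lam (fun j => g ^ n j) = g ^ (n ⬝ᵥ lam) := by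
  simp [character_apply, dotProduct, ← _root_.zpow_mul, Finset.prod_zpow_eq_zpow_sum]

lemma character_character (lam : Fin k → ℤ) (B : Matrix (Fin k) (Fin n) ℤ) (t : Fin n → G) :
    character lam (fun j => character (B j) t) = character (lam ᵥ* B) t := by
  simp only [character_apply, Matrix.vecMul, dotProduct, ← Finset.prod_zpow, ← _root_.zpow_mul,
    ← Finset.prod_zpow_eq_zpow_sum]
  rw [Finset.prod_comm]
  simp [mul_comm]

lemma character_mul_row (A : Matrix (Fin m) (Fin k) ℤ) (B : Matrix (Fin k) (Fin n) ℤ)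
    (i : Fin m) (t : Fin n → G) :
    character ((A * B) i) t = character (A i) (fun j => character (B j) t) := by
  rw [character_character]
  rfl

lemma character_smul_one_row (d : ℤ) (i : Fin k) (t : Fin k → G) :
    character ((d • (1 : Matrix (Fin k) (Fin k) ℤ)) i) t = t i ^ d := by
  rw [character_apply, Finset.prod_eq_single i]
  · simp
  · intro j _ hj; simp [Ne.symm hj]
  · simp

lemma exists_character_ne_one {g : G} (hg : ¬ IsOfFinOrder g) {D : Finset (Fin k → ℤ)}
    (hD : 0 ∉ D) : ∃ t : Fin k → G, ∀ ν ∈ D, character ν t ≠ 1 := by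
  obtain ⟨n, hn⟩ := exists_dotProduct_ne_zero hD
  refine ⟨fun j => g ^ n j, fun ν hν h => hn ν hν ?_⟩
  rw [character_zpow_const] at h
  exact injective_zpow_iff_not_isOfFinOrder.mpr hg (h.trans (zpow_zero g).symm)

lemma exists_character_eq_of_det_ne_zero
    (hroot : ∀ (c : G) (d : ℤ), d ≠ 0 → ∃ s : G, s ^ d = c)
    {A : Matrix (Fin k) (Fin k) ℤ} (hA : A.det ≠ 0) (c : Fin k → G) :
    ∃ t : Fin k → G, ∀ i, character (A i) t = c i := by
  choose s hs using fun i => hroot (c i) A.det hA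
  refine ⟨fun j => character (A.adjugate j) s, fun i => ?_⟩
  rw [← character_mul_row, Matrix.mul_adjugate, character_smul_one_row, hs]

lemma finite_setOf_character_eq_one
    (hfin : ∀ d : ℤ, d ≠ 0 → {x : G | x ^ d = 1}.Finite)
    {A : Matrix (Fin k) (Fin k) ℤ} (hA : A.det ≠ 0) :
    {t : Fin k → G | ∀ i, character (A i) t = 1}.Finite := by
  refine (Set.Finite.pi' fun _ => hfin A.det hA).subset fun t ht j => ?_
  have ht1 : (fun i => character (A i) t) = 1 := funext ht
  rw [Set.mem_ofPred_eq, ← character_smul_one_row, ← Matrix.adjugate_mul, character_mul_row, ht1,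
    map_one]

section Weights

variable {K U : Type*} [Field K] [AddCommGroup U] [Module K U]
  (ρ : (Fin k → Kˣ) →* (U ≃ₗ[K] U))

def IsWeightVector (lam : Fin k → ℤ) (v : U) : Prop :=
  ∀ t, ρ t v = ((character lam t : Kˣ) : K) • v

def weights : Set (Fin k → ℤ) :=
  {lam | ∃ v, v ≠ 0 ∧ IsWeightVector ρ lam v}

def IsSpannedByWeightVectors : Prop :=
  ∀ u : U, ∃ (s : Finset (Fin k → ℤ)) (c : (Fin k → ℤ) → U),
    u = ∑ lam ∈ s, c lam ∧ ∀ lam ∈ s, IsWeightVector ρ lam (c lam)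

variable {ρ}

lemma IsWeightVector.map_sum {ι : Type*} [Fintype ι] {μ : ι → Fin k → ℤ} {f : ι → U}
    (hf : ∀ a, IsWeightVector ρ (μ a) (f a)) (t : Fin k → Kˣ) :
    ρ t (∑ a, f a) = Fintype.linearCombination K f fun a => ((character (μ a) t : Kˣ) : K) := by
  simp [Fintype.linearCombination_apply, fun a => hf a t]

lemma IsWeightVector.range_orbit_sum {ι : Type*} [Fintype ι] {μ : ι → Fin k → ℤ} {f : ι → U}
    (hf : ∀ a, IsWeightVector ρ (μ a) (f a)) :
    Set.range (fun t => ρ t (∑ a, f a)) = Fintype.linearCombination K f ''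
      Set.range fun (t : Fin k → Kˣ) a => ((character (μ a) t : Kˣ) : K) := by
  rw [← Set.range_comp]
  exact congrArg Set.range (funext (IsWeightVector.map_sum hf))

lemma IsWeightVector.character_eq_one_of_map_sum_eq {ι : Type*} [Fintype ι]
    {μ : ι → Fin k → ℤ} {f : ι → U} (hf : ∀ a, IsWeightVector ρ (μ a) (f a))
    (hli : LinearIndependent K f) {t : Fin k → Kˣ} (ht : ρ t (∑ a, f a) = ∑ a, f a) (a : ι) :
    character (μ a) t = 1 := by
  have hsum : ∑ a, f a = Fintype.linearCombination K f 1 := by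
    simp [Fintype.linearCombination_apply]
  have h := hli.fintypeLinearCombination_injective <|
    (IsWeightVector.map_sum hf t).symm.trans (ht.trans hsum)
  exact Units.val_eq_one.mp (congrFun h a)

lemma range_character_sumElim_neg [IsAlgClosed K] {A : Matrix (Fin k) (Fin k) ℤ}
    (hA : A.det ≠ 0) :
    Set.range (fun (t : Fin k → Kˣ) (a : Fin k ⊕ Fin k) =>
      ((character (Sum.elim (fun i => A i) (-fun i => A i) a) t : Kˣ) : K)) =
    {c | ∀ i, c (Sum.inl i) * c (Sum.inr i) = 1} := by
  ext c
  constructor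
  · rintro ⟨t, rfl⟩ i
    simp [character_neg]
  · intro hc
    obtain ⟨t, ht⟩ := exists_character_eq_of_det_ne_zero
      (fun c d hd => IsAlgClosed.exists_zpow_eq_units c hd) hA
      (fun i => Units.mkOfMulEqOne _ _ (hc i))
    refine ⟨t, funext ?_⟩
    rintro (i | i)
    · simp [ht]
    · simp [character_neg, ht, eq_inv_of_mul_eq_one_right (hc i)]

variable [CharZero K]

lemma IsWeightVector.linearIndependent {ι : Type*} [Fintype ι] {μ : ι → Fin k → ℤ}
    (hμ : Function.Injective μ) {f : ι → U} (hf : ∀ a, IsWeightVector ρ (μ a) (f a))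
    (hf0 : ∀ a, f a ≠ 0) : LinearIndependent K f := by
  classical
  obtain ⟨t, ht⟩ := exists_character_ne_one (Units.not_isOfFinOrder_mk0_two K)
    (D := Finset.univ.offDiag.image fun p => μ p.1 - μ p.2) (by simp [sub_eq_zero, hμ.eq_iff])
  refine Module.End.eigenvectors_linearIndependent' (ρ t : U →ₗ[K] U)
    (fun a => ((character (μ a) t : Kˣ) : K)) (fun a b hab => ?_) f fun a =>
      Module.End.hasEigenvector_iff.mpr ⟨Module.End.mem_eigenspace_iff.mpr (hf a t), hf0 a⟩
  by_contra hne
  refine ht _ (Finset.mem_image_of_mem _ (a := (a, b)) (by simpa using hne)) ?_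
  rw [character_sub, Units.ext hab, div_self']

lemma IsWeightVector.apply_eq_zero {ω : LinearMap.BilinForm K U}
    (hω : ∀ (t : Fin k → Kˣ) (u w : U), ω (ρ t u) (ρ t w) = ω u w) {lam mu : Fin k → ℤ}
    {v w : U} (hv : IsWeightVector ρ lam v) (hw : IsWeightVector ρ mu w) (h : lam + mu ≠ 0) :
    ω v w = 0 := by
  obtain ⟨t, ht⟩ := exists_character_ne_one (Units.not_isOfFinOrder_mk0_two K)
    (D := {lam + mu}) (by simpa [eq_comm] using h)
  refine ω.apply_eq_zero_of_mul_ne_one (ρ t) (hω t) (hv t) (hw t) fun h1 => ?_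
  refine ht _ (Finset.mem_singleton_self _) (Units.ext ?_)
  rw [character_add, Units.val_mul, h1, Units.val_one]

lemma neg_mem_weights {ω : LinearMap.BilinForm K U}
    (hω : ∀ (t : Fin k → Kˣ) (u w : U), ω (ρ t u) (ρ t w) = ω u w)
    (hnd : ∀ u : U, (∀ w : U, ω u w = 0) → u = 0) (hρ : IsSpannedByWeightVectors ρ)
    {lam : Fin k → ℤ} (hlam : lam ∈ weights ρ) : -lam ∈ weights ρ := by
  obtain ⟨v, hv0, hv⟩ := hlam
  obtain ⟨w, hw⟩ : ∃ w, ω v w ≠ 0 := by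
    by_contra! h
    exact hv0 (hnd v h)
  obtain ⟨s, c, rfl, hc⟩ := hρ w
  obtain ⟨mu, hmu, hvc⟩ := Finset.exists_ne_zero_of_sum_ne_zero (by rwa [map_sum] at hw)
  have hsum : lam + mu = 0 := by
    by_contra h
    exact hvc (hv.apply_eq_zero hω (hc mu hmu) h)
  rw [← eq_neg_of_add_eq_zero_right hsum]
  exact ⟨c mu, fun h => hvc (by rw [h, map_zero]), hc mu hmu⟩

lemma eq_zero_of_forall_mem_weights_dotProduct_eq_zero (heff : Function.Injective ρ)
    (hρ : IsSpannedByWeightVectors ρ) (a : Fin k → ℤ)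
    (ha : ∀ lam ∈ weights ρ, a ⬝ᵥ lam = 0) : a = 0 := by
  set g := Units.mk0 (2 : K) two_ne_zero
  have htriv : ρ (fun j => g ^ a j) = 1 := LinearEquiv.ext fun x => by
    obtain ⟨s, c, rfl, hc⟩ := hρ x
    rw [map_sum]
    refine Finset.sum_congr rfl fun lam hlam => ?_
    rw [hc lam hlam, character_zpow_const]
    by_cases h0 : c lam = 0
    · rw [h0, smul_zero]
    · rw [ha lam ⟨c lam, h0, hc lam hlam⟩, zpow_zero, Units.val_one, one_smul]
  funext j
  exact injective_zpow_iff_not_isOfFinOrder.mpr (Units.not_isOfFinOrder_mk0_two K)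
    ((congrFun (heff (htriv.trans (map_one ρ).symm)) j).trans (zpow_zero g).symm)

end Weights

end Torus

open Torus

theorem torus_symplectic_closed_orbit_general
    {K : Type*} [Field K] [IsAlgClosed K] [CharZero K]
    {U : Type*} [AddCommGroup U] [Module K U]
    (ω : U →ₗ[K] U →ₗ[K] K)
    (hnd : ∀ u : U, (∀ w : U, ω u w = 0) → u = 0)
    (k : ℕ) (ρ : (Fin k → Kˣ) →* (U ≃ₗ[K] U))
    (hω : ∀ (t : Fin k → Kˣ) (u w : U), ω (ρ t u) (ρ t w) = ω u w)
    (heff : Function.Injective ρ)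
    (hrat : ∀ u : U, ∃ (s : Finset (Fin k → ℤ)) (c : (Fin k → ℤ) → U),
      u = (∑ lam ∈ s, c lam) ∧
      ∀ lam ∈ s, ∀ t : Fin k → Kˣ,
        ρ t (c lam) = (Units.val (∏ j : Fin k, t j ^ lam j) : K) • c lam) :
    ∃ u : U, ZarClosedV K (Set.range fun t : Fin k → Kˣ => ρ t u) ∧
      Set.Finite {t : Fin k → Kˣ | ρ t u = u} := by
  obtain ⟨A, hAΛ, hA⟩ := exists_det_ne_zero_of_forall_dotProduct_eq_zero
    (eq_zero_of_forall_mem_weights_dotProduct_eq_zero heff hrat)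
  choose v hv0 hv using hAΛ
  choose w hw0 hw using fun i => neg_mem_weights hω hnd hrat ⟨v i, hv0 i, hv i⟩
  have hf : ∀ a, IsWeightVector ρ (Sum.elim (fun i => A i) (-fun i => A i) a) (Sum.elim v w a) :=
    Sum.forall.2 ⟨hv, hw⟩
  have hli : LinearIndependent K (Sum.elim v w) :=
    IsWeightVector.linearIndependent
      (Matrix.linearIndependent_rows_of_det_ne_zero hA).injective_sumElim_neg hf
      (Sum.forall.2 ⟨hv0, hw0⟩)
  refine ⟨∑ a, Sum.elim v w a, ?_, ?_⟩
  · rw [IsWeightVector.range_orbit_sum hf, range_character_sumElim_neg hA]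
    exact (zarClosedV_setOf_mul_eq_one _).image_of_injective _
      hli.fintypeLinearCombination_injective
  · refine (finite_setOf_character_eq_one (fun _ => Units.finite_setOf_zpow_eq_one K) hA).subset
      fun t ht i => IsWeightVector.character_eq_one_of_map_sum_eq hf hli ht (Sum.inl i)

/-- **Closed orbit of maximal dimension for a symplectic torus action.**  Let a torus
`T = (K^×)^k` act linearly and rationally (i.e. `U` is spanned by weight vectors) on a
finite-dimensional symplectic vector space `U`, preserving the symplectic form, with the
action effective.  Then there exists a vector `u ∈ U` whose `T`-orbit is Zariski closed and
of dimension `dim T`; for a `k`-dimensional torus the latter is expressed by finiteness of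
the stabilizer of `u`. -/
theorem torus_symplectic_closed_orbit
    {K : Type*} [Field K] [IsAlgClosed K] [CharZero K]
    {U : Type*} [AddCommGroup U] [Module K U] [FiniteDimensional K U]
    (ω : U →ₗ[K] U →ₗ[K] K)
    (halt : ∀ u : U, ω u u = 0)
    (hnd : ∀ u : U, (∀ w : U, ω u w = 0) → u = 0)
    (k : ℕ) (ρ : (Fin k → Kˣ) →* (U ≃ₗ[K] U))
    (hω : ∀ (t : Fin k → Kˣ) (u w : U), ω (ρ t u) (ρ t w) = ω u w)
    (heff : Function.Injective ρ)
    (hrat : ∀ u : U, ∃ (s : Finset (Fin k → ℤ)) (c : (Fin k → ℤ) → U),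
      u = (∑ lam ∈ s, c lam) ∧
      ∀ lam ∈ s, ∀ t : Fin k → Kˣ,
        ρ t (c lam) = (Units.val (∏ j : Fin k, t j ^ lam j) : K) • c lam) :
    ∃ u : U, ZarClosedV K (Set.range fun t : Fin k → Kˣ => ρ t u) ∧
      Set.Finite {t : Fin k → Kˣ | ρ t u = u} :=
  torus_symplectic_closed_orbit_general ω hnd k ρ hω heff hrat
end

section
/- Let ξ be a principal element of a Levi subalgebra l of a reductive Lie algebra g (i.e., the centralizer of the semisimple part ξ_s is contained in l), and let p = l ⊕ p_u be a parabolic subalgebra with Levi part l and nilradical p_u. Then z_g(ξ) ∩ p_u = {0}, and consequently the map ad(ξ) : p_u → p_u is invertible. -/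
/-!
If `⁅ξ, u⁆ = 0`, then `ad ξ_s u = -ad ξ_n u`, and since `ad ξ_s` and `ad ξ_n` commute, `u` is
killed by a power of `ad ξ_s`. A diagonalizable endomorphism has no nontrivial generalized eigenvectors, so
`⁅ξ_s, u⁆ = 0`; principality puts `u` in `l`, and `l ∩ p_u = 0` gives `u = 0`. Invertibility of
`ad ξ` on the finite-dimensional, `ad ξ`-stable space `p_u` follows.
-/

namespace Module.End

variable {R M : Type*} [CommRing R] [AddCommGroup M] [Module R M]

lemma maxGenEigenspace_eq_eigenspace_of_iSup_eigenspace_eq_top [IsDomain R] [IsTorsionFree R M]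
    {f : End R M} (hf : ⨆ μ, f.eigenspace μ = ⊤) (μ : R) :
    f.maxGenEigenspace μ = f.eigenspace μ :=
  congrFun ((f.independent_maxGenEigenspace.le_iff_eq_of_iSup_eq_top hf).mp
    fun _ ↦ eigenspace_le_maxGenEigenspace).symm μ

lemma pow_apply_eq_of_commute {f g : End R M} (hfg : Commute f g) {u : M} (hu : f u = g u)
    (k : ℕ) : (f ^ k) u = (g ^ k) u := by
  induction k with
  | zero => rfl
  | succ k ih =>
    rw [pow_succ, mul_apply, hu, ← mul_apply, (hfg.pow_left k).eq, mul_apply, ih, ← mul_apply,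
      ← pow_succ']

lemma ker_add_le_ker_of_isNilpotent [IsDomain R] [IsTorsionFree R M] {f n : End R M}
    (hf : ⨆ μ, f.eigenspace μ = ⊤) (hfn : Commute f n) (hn : IsNilpotent n) :
    LinearMap.ker (f + n) ≤ LinearMap.ker f := by
  intro u hu
  obtain ⟨k, hk⟩ := hn.neg
  have hu_neg : f u = (-n) u := eq_neg_of_add_eq_zero_left hu
  have hu_gen : u ∈ f.maxGenEigenspace 0 :=
    (mem_maxGenEigenspace f 0 u).mpr
      ⟨k, by rw [zero_smul, sub_zero, pow_apply_eq_of_commute hfn.neg_right hu_neg, hk,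
        LinearMap.zero_apply]⟩
  rwa [maxGenEigenspace_eq_eigenspace_of_iSup_eigenspace_eq_top hf, eigenspace_zero] at hu_gen

end Module.End

lemma Submodule.exists_apply_eq_of_mapsTo_of_injOn {K V : Type*} [DivisionRing K] [AddCommGroup V]
    [Module K V] [FiniteDimensional K V] (f : Module.End K V) (S : Submodule K V)
    (hS : ∀ x ∈ S, f x ∈ S) (hinj : ∀ x ∈ S, f x = 0 → x = 0) :
    ∀ w ∈ S, ∃ u ∈ S, f u = w := by
  have hres : Function.Injective (f.restrict hS) :=
    (injective_iff_map_eq_zero _).mpr fun x hx ↦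
      Subtype.ext (hinj x x.2 (congrArg Subtype.val hx))
  intro w hw
  obtain ⟨u, hu⟩ := LinearMap.injective_iff_surjective.mp hres ⟨w, hw⟩
  exact ⟨u, u.2, congrArg Subtype.val hu⟩

lemma LieAlgebra.lie_eq_zero_of_lie_add_eq_zero {R L : Type*} [CommRing R] [IsDomain R]
    [LieRing L] [LieAlgebra R L] [Module.IsTorsionFree R L] {xs xn u : L}
    (hs : ⨆ μ : R, (ad R L xs).eigenspace μ = ⊤) (hn : IsNilpotent (ad R L xn))
    (hc : ⁅xs, xn⁆ = 0) (hu : ⁅xs + xn, u⁆ = 0) : ⁅xs, u⁆ = 0 := by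
  have hcomm : Commute (ad R L xs) (ad R L xn) := LinearMap.ext fun v ↦ by
    simp only [Module.End.mul_apply, ad_apply, leibniz_lie xs xn v, hc, zero_lie, zero_add]
  refine Module.End.ker_add_le_ker_of_isNilpotent hs hcomm hn ?_
  rwa [LinearMap.mem_ker, ← map_add, ad_apply]

theorem ad_principal_element_invertible_on_nilradical_general
    {K g : Type*} [Field K]
    [LieRing g] [LieAlgebra K g] [Module.Finite K g]
    (l p pu : LieSubalgebra K g)
    (hlp : l ≤ p)
    (hint : l ⊓ pu = ⊥)
    (hideal : ∀ x ∈ p, ∀ u ∈ pu, ⁅x, u⁆ ∈ pu)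
    (ξ ξs ξn : g) (hξl : ξ ∈ l) (hjordan : ξ = ξs + ξn)
    (hcomm : ⁅ξs, ξn⁆ = 0)
    (hss : (⨆ μ : K, Module.End.eigenspace (LieAlgebra.ad K g ξs) μ) = ⊤)
    (hnil : IsNilpotent (LieAlgebra.ad K g ξn))
    (hprincipal : ∀ x : g, ⁅ξs, x⁆ = 0 → x ∈ l) :
    (∀ u ∈ pu, ⁅ξ, u⁆ = 0 → u = 0) ∧ (∀ w ∈ pu, ∃ u ∈ pu, ⁅ξ, u⁆ = w) := by
  have hinj : ∀ u ∈ pu, ⁅ξ, u⁆ = 0 → u = 0 := by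
    intro u hu hξu
    have hu_l : u ∈ l :=
      hprincipal u (LieAlgebra.lie_eq_zero_of_lie_add_eq_zero hss hnil hcomm (hjordan ▸ hξu))
    have hu_inf : u ∈ l ⊓ pu := ⟨hu_l, hu⟩
    rwa [hint, LieSubalgebra.mem_bot] at hu_inf
  exact ⟨hinj, pu.toSubmodule.exists_apply_eq_of_mapsTo_of_injOn (LieAlgebra.ad K g ξ)
    (fun u hu ↦ hideal ξ (hlp hξl) u hu) hinj⟩

/-- **`ad(ξ)` is invertible on the nilradical for a principal element.**  Let `g` be a
finite-dimensional Lie algebra over an algebraically closed field of characteristic zero,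
`l ≤ p` a Levi subalgebra of a parabolic subalgebra `p = l ⊕ p_u` with nilradical `p_u`,
and `ξ ∈ l` a principal element:  writing `ξ = ξ_s + ξ_n` for the Jordan decomposition
(`ad ξ_s` diagonalizable, `ad ξ_n` nilpotent, `⁅ξ_s, ξ_n⁆ = 0`), the centralizer
`z_g(ξ_s)` is contained in `l`.  Then `z_g(ξ) ∩ p_u = {0}`, and consequently
`ad ξ : p_u → p_u` is invertible. -/
theorem ad_principal_element_invertible_on_nilradical
    {K g : Type*} [Field K] [IsAlgClosed K] [CharZero K]
    [LieRing g] [LieAlgebra K g] [Module.Finite K g]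
    (l p pu : LieSubalgebra K g)
    (hlp : l ≤ p) (hpup : pu ≤ p)
    (hdecomp : ∀ x ∈ p, ∃ y ∈ l, ∃ u ∈ pu, x = y + u)
    (hint : l ⊓ pu = ⊥)
    (hideal : ∀ x ∈ p, ∀ u ∈ pu, ⁅x, u⁆ ∈ pu)
    (ξ ξs ξn : g) (hξl : ξ ∈ l) (hjordan : ξ = ξs + ξn)
    (hcomm : ⁅ξs, ξn⁆ = 0)
    (hss : (⨆ μ : K, Module.End.eigenspace (LieAlgebra.ad K g ξs) μ) = ⊤)
    (hnil : IsNilpotent (LieAlgebra.ad K g ξn))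
    (hprincipal : ∀ x : g, ⁅ξs, x⁆ = 0 → x ∈ l) :
    (∀ u ∈ pu, ⁅ξ, u⁆ = 0 → u = 0) ∧ (∀ w ∈ pu, ∃ u ∈ pu, ⁅ξ, u⁆ = w) :=
  ad_principal_element_invertible_on_nilradical_general l p pu hlp hint hideal ξ ξs ξn hξl hjordan
    hcomm hss hnil hprincipal
end
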